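/- arXiv:0910.2469 — 2 statements merged into one kernel-verified Lean document; each statement's English description precedes it below -/
import Mathlib

section
/- Let G be a 4-regular minimal graph in the plane with n attaching points. Then n is even and the number of vertices of G is at most C(n/2, 2) + n, where C(m, 2) = m(m−1)/2 is the binomial coefficient. -/
open scoped Classical
noncomputable section

/-- The Euclidean plane. -/
abbrev Plane : Type := EuclideanSpace ℝ (Fin 2)

/-- A `d`-regular minimal graph in the plane: a finite simple graph whose vertices are
points of the plane and whose edges are straight segments meeting only at common
endpoints, with a distinguished set of degree-one attaching points, all other vertices
having degree `d` and the sum of the unit vectors towards their neighbours vanishing. -/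
structure PlaneMinGraph (d : ℕ) where
  verts : Finset Plane
  adj : Plane → Plane → Prop
  adj_symm : ∀ {u v}, adj u v → adj v u
  adj_irrefl : ∀ v, ¬ adj v v
  adj_mem : ∀ {u v}, adj u v → u ∈ verts
  attach : Finset Plane
  attach_subset : attach ⊆ verts
  embedded : ∀ {u v x y}, adj u v → adj x y →
    (u = x ∧ v = y) ∨ (u = y ∧ v = x) ∨
      ∀ p ∈ segment ℝ u v ∩ segment ℝ x y, (p = u ∨ p = v) ∧ (p = x ∨ p = y)
  degree_attach : ∀ a ∈ attach, (verts.filter (fun u => adj a u)).card = 1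
  degree_other : ∀ v ∈ verts, v ∉ attach → (verts.filter (fun u => adj v u)).card = d
  balanced : ∀ v ∈ verts, v ∉ attach →
    ∑ u ∈ verts.filter (fun u => adj v u), (‖u - v‖⁻¹ • (u - v)) = 0


-- algebraic lemma in ℂ
lemma complex_four (a b c d : ℂ) (ha : ‖a‖ = 1) (hb : ‖b‖ = 1) (hc : ‖c‖ = 1)
    (hd : ‖d‖ = 1) (hsum : a + b + c + d = 0) : b = -a ∨ c = -a ∨ d = -a := by
  have ha0 : a ≠ 0 := by intro h; simp [h] at ha
  have hb0 : b ≠ 0 := by intro h; simp [h] at hb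
  have hc0 : c ≠ 0 := by intro h; simp [h] at hc
  have hd0 : d ≠ 0 := by intro h; simp [h] at hd
  have key : ∀ z : ℂ, ‖z‖ = 1 → (starRingEnd ℂ) z = z⁻¹ := by
    intro z hz
    have hz0 : z ≠ 0 := by intro h; simp [h] at hz
    have h1 : z * (starRingEnd ℂ) z = 1 := by
      rw [Complex.mul_conj]
      norm_cast
      rw [Complex.normSq_eq_norm_sq, hz]; norm_num
    field_simp
    linear_combination h1
  have hconj : (starRingEnd ℂ) (a + b + c + d) = 0 := by rw [hsum]; simp
  rw [map_add, map_add, map_add, key a ha, key b hb, key c hc, key d hd] at hconj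
  have h3 : b*c*d + a*c*d + a*b*d + a*b*c = 0 := by
    field_simp at hconj
    linear_combination hconj
  have hkey : (a + b) * ((a + c) * (a + d)) = 0 := by
    linear_combination a^2 * hsum + h3
  rcases mul_eq_zero.1 hkey with h | h
  · left; linear_combination h
  · rcases mul_eq_zero.1 h with h | h
    · right; left; linear_combination h
    · right; right; linear_combination h

/-- Four unit vectors in the plane summing to zero pair up antipodally. -/
lemma plane_four (a b c d : Plane) (ha : ‖a‖ = 1) (hb : ‖b‖ = 1) (hc : ‖c‖ = 1)
    (hd : ‖d‖ = 1) (hsum : a + b + c + d = 0) : b = -a ∨ c = -a ∨ d = -a := by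
  set f := (Complex.isometryOfOrthonormal
    (EuclideanSpace.basisFun (Fin 2) ℝ)).symm with hf
  have hs : f a + f b + f c + f d = 0 := by
    rw [← map_add, ← map_add, ← map_add, hsum, map_zero]
  have := complex_four (f a) (f b) (f c) (f d) (by simp [ha]) (by simp [hb])
    (by simp [hc]) (by simp [hd]) hs
  rcases this with h | h | h
  · left; exact f.injective (by simpa using h)
  · right; left; exact f.injective (by simpa using h)
  · right; right; exact f.injective (by simpa using h)

/-- unit vector pointing from `v` towards `u`. -/
def udir (v u : Plane) : Plane := ‖u - v‖⁻¹ • (u - v)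

lemma norm_udir {v u : Plane} (h : u ≠ v) : ‖udir v u‖ = 1 := by
  have : u - v ≠ 0 := sub_ne_zero.2 h
  simp [udir, norm_smul, norm_inv, inv_mul_cancel₀, norm_ne_zero_iff.2 this]

lemma udir_symm (v u : Plane) : udir u v = - udir v u := by
  simp [udir, norm_sub_rev v u]
  rw [← smul_neg, neg_sub]

lemma udir_ne_neg {v u : Plane} (h : u ≠ v) : udir v u ≠ - udir v u := by
  intro hh
  have : (2 : ℝ) • udir v u = 0 := by
    rw [two_smul]; nth_rewrite 1 [hh]; simp
  have h2 : udir v u = 0 := by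
    simpa using (smul_eq_zero.1 this).resolve_left (by norm_num)
  have := norm_udir h
  rw [h2] at this; simp at this

lemma sub_eq_norm_smul_udir (v u : Plane) (h : u ≠ v) :
    u - v = ‖u - v‖ • udir v u := by
  rw [udir, smul_smul, mul_inv_cancel₀ (norm_ne_zero_iff.2 (sub_ne_zero.2 h)), one_smul]

lemma inner_udir {v u : Plane} (h : u ≠ v) :
    (inner ℝ (u - v) (udir v u) : ℝ) = ‖u - v‖ := by
  rw [udir, real_inner_smul_right, real_inner_self_eq_norm_sq]
  have hn : ‖u - v‖ ≠ 0 := norm_ne_zero_iff.2 (sub_ne_zero.2 h)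
  field_simp


section Infra

variable {G : PlaneMinGraph 4}

lemma adj_ne {u v : Plane} (h : G.adj u v) : v ≠ u := by
  intro hh; subst hh; exact G.adj_irrefl _ h

lemma adj_mem' {u v : Plane} (h : G.adj u v) : v ∈ G.verts :=
  G.adj_mem (G.adj_symm h)

lemma mem_nbr {v u : Plane} :
    u ∈ G.verts.filter (fun u => G.adj v u) ↔ G.adj v u := by
  constructor
  · intro h; exact (Finset.mem_filter.1 h).2
  · intro h; exact Finset.mem_filter.2 ⟨adj_mem' h, h⟩

/-- Two edges from a common vertex in the same direction coincide. -/
lemma no_overlap {v u₁ u₂ : Plane} (h1 : G.adj v u₁) (h2 : G.adj v u₂)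
    (hd : udir v u₁ = udir v u₂) : u₁ = u₂ := by
  wlog hle : ‖u₁ - v‖ ≤ ‖u₂ - v‖ with H
  · exact (H h2 h1 hd.symm (le_of_not_ge hle)).symm
  by_contra hne
  have hne1 : u₁ ≠ v := adj_ne h1
  have hne2 : u₂ ≠ v := adj_ne h2
  have hr : (0:ℝ) < ‖u₁ - v‖ := norm_pos_iff.2 (sub_ne_zero.2 hne1)
  have hR : (0:ℝ) < ‖u₂ - v‖ := norm_pos_iff.2 (sub_ne_zero.2 hne2)
  set m := v + (2⁻¹ : ℝ) • (u₁ - v) with hm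
  have hm1 : m ∈ segment ℝ v u₁ := by
    rw [segment_eq_image']
    exact ⟨2⁻¹, by constructor <;> norm_num, rfl⟩
  have hrel : u₂ - v = (‖u₂ - v‖ * ‖u₁ - v‖⁻¹) • (u₁ - v) := by
    conv_lhs => rw [sub_eq_norm_smul_udir v u₂ hne2]
    rw [← hd, udir, smul_smul]
  have hm2 : m ∈ segment ℝ v u₂ := by
    rw [segment_eq_image']
    obtain ⟨t, ht⟩ : ∃ t : ℝ, t = ‖u₁ - v‖ / (2 * ‖u₂ - v‖) := ⟨_, rfl⟩
    refine ⟨t, ⟨by rw [ht]; positivity, ?_⟩, ?_⟩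
    · rw [ht, div_le_one (by positivity)]; nlinarith
    · show v + t • (u₂ - v) = m
      rw [hm, hrel, smul_smul]
      have hc : t * (‖u₂ - v‖ * ‖u₁ - v‖⁻¹) = 2⁻¹ := by
        rw [ht]; field_simp
      rw [hc]
  rcases G.embedded h1 h2 with ⟨_, h⟩ | ⟨h, _⟩ | h
  · exact hne h
  · exact hne2 h.symm
  · rcases (h m ⟨hm1, hm2⟩).1 with h' | h'
    · rw [hm] at h'
      have h0 : (2⁻¹ : ℝ) • (u₁ - v) = 0 := by
        have := (add_eq_left).1 h'
        exact this
      have : u₁ - v = 0 := by simpa using (smul_eq_zero.1 h0).resolve_left (by norm_num)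
      exact hne1 (sub_eq_zero.1 this)
    · rw [hm] at h'
      have h2 : u₁ - v = (2⁻¹ : ℝ) • (u₁ - v) := by
        nth_rewrite 1 [← h']; rw [add_sub_cancel_left]
      have h0 : ((1:ℝ) - 2⁻¹) • (u₁ - v) = 0 := by
        rw [sub_smul, one_smul, ← h2, sub_self]
      have : u₁ - v = 0 := by
        have := (smul_eq_zero.1 h0).resolve_left (by norm_num)
        exact this
      exact hne1 (sub_eq_zero.1 this)

/-- Pairing at an interior vertex: every edge has an opposite edge. -/
lemma exists_opp {v u : Plane} (hv : v ∈ G.verts) (hA : v ∉ G.attach)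
    (h : G.adj v u) : ∃ w, G.adj v w ∧ udir v w = - udir v u := by
  classical
  set s := G.verts.filter (fun u => G.adj v u) with hs
  have hcard : s.card = 4 := G.degree_other v hv hA
  have hu : u ∈ s := mem_nbr.2 h
  have hcard3 : (s.erase u).card = 3 := by
    rw [Finset.card_erase_of_mem hu, hcard]
  obtain ⟨b, c, d, hbc, hbd, hcd, habc⟩ := Finset.card_eq_three.1 hcard3
  have hins : s = insert u {b, c, d} := by
    rw [← habc, Finset.insert_erase hu]
  have hunotin : u ∉ ({b, c, d} : Finset Plane) := by
    rw [← habc]; exact Finset.notMem_erase u s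
  have hmem : ∀ x ∈ ({b, c, d} : Finset Plane), G.adj v x := by
    intro x hx
    have : x ∈ s := by rw [hins]; exact Finset.mem_insert_of_mem hx
    exact mem_nbr.1 this
  have hsum : udir v u + (udir v b + (udir v c + udir v d)) = 0 := by
    have h0 := G.balanced v hv hA
    rw [← hs, hins] at h0
    rw [Finset.sum_insert hunotin] at h0
    rw [Finset.sum_insert (by simp [hbc, hbd]), Finset.sum_insert (by simp [hcd]),
      Finset.sum_singleton] at h0
    simpa [udir] using h0
  have hnorm : ∀ x ∈ ({b, c, d} : Finset Plane), ‖udir v x‖ = 1 := by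
    intro x hx; exact norm_udir (adj_ne (hmem x hx))
  have h4 := plane_four (udir v u) (udir v b) (udir v c) (udir v d)
    (norm_udir (adj_ne h)) (hnorm b (by simp)) (hnorm c (by simp)) (hnorm d (by simp))
    (by rw [add_assoc, add_assoc]; exact hsum)
  rcases h4 with h' | h' | h'
  · exact ⟨b, hmem b (by simp), h'⟩
  · exact ⟨c, hmem c (by simp), h'⟩
  · exact ⟨d, hmem d (by simp), h'⟩



/-- One step along a straight line in the graph. -/
def Step (G : PlaneMinGraph 4) (e f : Plane × Plane) : Prop :=
  G.adj e.1 e.2 ∧ G.adj f.1 f.2 ∧ f.1 = e.2 ∧ e.2 ∉ G.attach ∧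
    udir f.1 f.2 = udir e.1 e.2

lemma Step.det {e f f' : Plane × Plane} (h : Step G e f) (h' : Step G e f') : f = f' := by
  obtain ⟨a, b⟩ := e
  obtain ⟨x, y⟩ := f
  obtain ⟨x', y'⟩ := f'
  obtain ⟨he, hf, h1, hA, hd⟩ := h
  obtain ⟨_, hf', h1', _, hd'⟩ := h'
  simp only at *
  subst h1 h1'
  have h2 : y = y' := no_overlap hf hf' (hd.trans hd'.symm)
  rw [h2]

lemma step_exists {e : Plane × Plane} (he : G.adj e.1 e.2) (hA : e.2 ∉ G.attach) :
    ∃ f, Step G e f := by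
  obtain ⟨w, hw, hd⟩ := exists_opp (adj_mem' he) hA (G.adj_symm he)
  exact ⟨(e.2, w), he, hw, rfl, hA, by rw [hd, ← udir_symm]⟩

lemma Step.rev {e f : Plane × Plane} (h : Step G e f) : Step G (f.2, f.1) (e.2, e.1) := by
  obtain ⟨he, hf, h1, hA, hd⟩ := h
  refine ⟨G.adj_symm hf, G.adj_symm he, h1.symm, ?_, ?_⟩
  · show f.1 ∉ G.attach
    rw [h1]; exact hA
  · show udir e.2 e.1 = udir f.2 f.1
    rw [udir_symm e.1 e.2, udir_symm f.1 f.2, hd]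

lemma rtg_rev {e f : Plane × Plane} (h : Relation.ReflTransGen (Step G) e f) :
    Relation.ReflTransGen (Step G) (f.2, f.1) (e.2, e.1) := by
  induction h with
  | refl => exact Relation.ReflTransGen.refl
  | tail _ hstep ih => exact Relation.ReflTransGen.head hstep.rev ih

lemma rtg_dir {e f : Plane × Plane} (h : Relation.ReflTransGen (Step G) e f) :
    udir f.1 f.2 = udir e.1 e.2 := by
  induction h with
  | refl => rfl
  | tail _ hstep ih => rw [hstep.2.2.2.2, ih]

lemma rtg_adj {e f : Plane × Plane} (h : Relation.ReflTransGen (Step G) e f)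
    (he : G.adj e.1 e.2) : G.adj f.1 f.2 := by
  induction h with
  | refl => exact he
  | tail _ hstep _ => exact hstep.2.1

lemma rtg_pos {e f : Plane × Plane} (h : Relation.ReflTransGen (Step G) e f)
    (he : G.adj e.1 e.2) : (0:ℝ) < inner ℝ (f.2 - e.1) (udir e.1 e.2) := by
  induction h with
  | refl =>
    rw [inner_udir (adj_ne he)]
    exact norm_pos_iff.2 (sub_ne_zero.2 (adj_ne he))
  | @tail g f hgf hstep ih =>
    have hgadj : G.adj g.1 g.2 := rtg_adj hgf he
    have hd : udir f.1 f.2 = udir e.1 e.2 := by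
      rw [hstep.2.2.2.2]; exact rtg_dir hgf
    have hpos : (0:ℝ) < inner ℝ (f.2 - f.1) (udir e.1 e.2) := by
      rw [← hd, inner_udir (adj_ne hstep.2.1)]
      exact norm_pos_iff.2 (sub_ne_zero.2 (adj_ne hstep.2.1))
    have hsplit : f.2 - e.1 = (f.2 - f.1) + (g.2 - e.1) := by
      rw [hstep.2.2.1]; abel
    rw [hsplit, inner_add_left]
    linarith

lemma rtg_collin {e f : Plane × Plane} (h : Relation.ReflTransGen (Step G) e f) :
    ∃ t : ℝ, f.2 - e.1 = t • udir e.1 e.2 := by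
  induction h with
  | refl =>
    by_cases hh : e.2 = e.1
    · exact ⟨0, by rw [hh]; simp⟩
    · exact ⟨‖e.2 - e.1‖, sub_eq_norm_smul_udir e.1 e.2 hh⟩
  | @tail g f hgf hstep ih =>
    obtain ⟨t, ht⟩ := ih
    have hne : f.2 ≠ f.1 := adj_ne hstep.2.1
    obtain ⟨c, hc⟩ : ∃ c : ℝ, c = ‖f.2 - f.1‖ := ⟨_, rfl⟩
    refine ⟨t + c, ?_⟩
    have h2 : f.2 - e.1 = (f.2 - f.1) + (g.2 - e.1) := by rw [hstep.2.2.1]; abel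
    have h3 : f.2 - f.1 = c • udir e.1 e.2 := by
      rw [hc]
      conv_lhs => rw [sub_eq_norm_smul_udir f.1 f.2 hne]
      rw [hstep.2.2.2.2, rtg_dir hgf]
    rw [h2, ht, h3, add_smul]
    abel

/-- Every edge leads to an attaching point. -/
lemma exists_reach (e : Plane × Plane) (he : G.adj e.1 e.2) :
    ∃ f, Relation.ReflTransGen (Step G) e f ∧ f.2 ∈ G.attach := by
  classical
  suffices H : ∀ N : ℕ, ∀ e : Plane × Plane, G.adj e.1 e.2 →
      (G.verts.filter (fun x => (0:ℝ) < inner ℝ (x - e.2) (udir e.1 e.2))).card < N →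
      ∃ f, Relation.ReflTransGen (Step G) e f ∧ f.2 ∈ G.attach by
    exact H _ e he (Nat.lt_succ_self _)
  intro N
  induction N with
  | zero => intro e _ h; omega
  | succ N ih =>
    intro e he hcard
    by_cases hA : e.2 ∈ G.attach
    · exact ⟨e, Relation.ReflTransGen.refl, hA⟩
    · obtain ⟨f, hf⟩ := step_exists he hA
      have hfadj : G.adj f.1 f.2 := hf.2.1
      have hd : udir f.1 f.2 = udir e.1 e.2 := hf.2.2.2.2
      have hkey : (0:ℝ) < inner ℝ (f.2 - e.2) (udir e.1 e.2) := by
        rw [← hd, ← hf.2.2.1, inner_udir (adj_ne hfadj)]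
        exact norm_pos_iff.2 (sub_ne_zero.2 (adj_ne hfadj))
      have hss : (G.verts.filter (fun x => (0:ℝ) < inner ℝ (x - f.2) (udir f.1 f.2))) ⊂
          (G.verts.filter (fun x => (0:ℝ) < inner ℝ (x - e.2) (udir e.1 e.2))) := by
        constructor
        · intro x hx
          rw [Finset.mem_filter] at hx ⊢
          refine ⟨hx.1, ?_⟩
          have h2 := hx.2
          rw [hd] at h2
          have hsplit : x - e.2 = (x - f.2) + (f.2 - e.2) := by abel
          rw [hsplit, inner_add_left]
          linarith
        · intro hsub
          have hmemf : f.2 ∈ (G.verts.filter (fun x => (0:ℝ) < inner ℝ (x - e.2) (udir e.1 e.2))) :=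
            Finset.mem_filter.2 ⟨adj_mem' hfadj, hkey⟩
          have := hsub hmemf
          rw [Finset.mem_filter] at this
          simp at this
      have hlt : (G.verts.filter (fun x => (0:ℝ) < inner ℝ (x - f.2) (udir f.1 f.2))).card < N := by
        have := Finset.card_lt_card hss
        omega
      obtain ⟨g, hg, hgA⟩ := ih f hfadj hlt
      exact ⟨g, Relation.ReflTransGen.head hf hg, hgA⟩

/-- Determinism of chains: reaching a terminal edge is unique. -/
lemma rtg_det {e f f' : Plane × Plane} (hef : Relation.ReflTransGen (Step G) e f)
    (hterm : f.2 ∈ G.attach) (hef' : Relation.ReflTransGen (Step G) e f') :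
    Relation.ReflTransGen (Step G) f' f := by
  have noOut : ∀ g, ¬ Step G f g := fun g hg => hg.2.2.2.1 hterm
  induction hef' with
  | refl => exact hef
  | @tail g f' hgf' hstep ih =>
    rcases (Relation.ReflTransGen.cases_head ih) with h | ⟨k, hk, hkf⟩
    · exact absurd (h ▸ hstep) (noOut _)
    · rwa [hstep.det hk]

lemma reach_unique {e f f' : Plane × Plane} (hef : Relation.ReflTransGen (Step G) e f)
    (hterm : f.2 ∈ G.attach) (hef' : Relation.ReflTransGen (Step G) e f')
    (hterm' : f'.2 ∈ G.attach) : f = f' := by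
  have h := rtg_det hef hterm hef'
  rcases Relation.ReflTransGen.cases_head h with h' | ⟨k, hk, _⟩
  · exact h'.symm
  · exact absurd hk (fun hg => hg.2.2.2.1 hterm')

/-- Semi-confluence of the deterministic step relation. -/
lemma rtg_confl {e f f' : Plane × Plane} (hef : Relation.ReflTransGen (Step G) e f)
    (hef' : Relation.ReflTransGen (Step G) e f') :
    Relation.ReflTransGen (Step G) f f' ∨ Relation.ReflTransGen (Step G) f' f := by
  induction hef' with
  | refl => right; exact hef
  | @tail g f' hgf' hstep ih =>
    rcases ih with h | h
    · left; exact h.tail hstep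
    · rcases Relation.ReflTransGen.cases_head h with h' | ⟨k, hk, hkf⟩
      · left; exact h' ▸ Relation.ReflTransGen.single hstep
      · right; rwa [hstep.det hk]

/-- The terminal edge of the straight chain starting at `e`. -/
def endE (G : PlaneMinGraph 4) (e : Plane × Plane) : Plane × Plane :=
  if h : ∃ f, Relation.ReflTransGen (Step G) e f ∧ f.2 ∈ G.attach then h.choose else e

lemma endE_spec {e : Plane × Plane} (he : G.adj e.1 e.2) :
    Relation.ReflTransGen (Step G) e (endE G e) ∧ (endE G e).2 ∈ G.attach := by
  have h := exists_reach e he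
  rw [endE, dif_pos h]
  exact h.choose_spec

lemma endE_eq {e f : Plane × Plane} (he : G.adj e.1 e.2)
    (hr : Relation.ReflTransGen (Step G) e f) (hA : f.2 ∈ G.attach) : endE G e = f :=
  reach_unique (endE_spec he).1 (endE_spec he).2 hr hA

/-- The unique neighbour of an attaching point. -/
def theNbr (G : PlaneMinGraph 4) (a : Plane) : Plane :=
  if h : (G.verts.filter (fun u => G.adj a u)).Nonempty then h.choose else a

lemma theNbr_adj {a : Plane} (ha : a ∈ G.attach) : G.adj a (theNbr G a) := by
  have h1 : (G.verts.filter (fun u => G.adj a u)).card = 1 := G.degree_attach a ha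
  have h : (G.verts.filter (fun u => G.adj a u)).Nonempty :=
    Finset.card_pos.1 (by omega)
  rw [theNbr, dif_pos h]
  exact (Finset.mem_filter.1 h.choose_spec).2

lemma theNbr_unique {a u : Plane} (ha : a ∈ G.attach) (h : G.adj a u) : u = theNbr G a := by
  have h1 : (G.verts.filter (fun u => G.adj a u)).card = 1 := G.degree_attach a ha
  exact Finset.card_le_one.1 (le_of_eq h1) u (mem_nbr.2 h) _ (mem_nbr.2 (theNbr_adj ha))

/-- The other end of the straight line through an attaching point. -/
def pend (G : PlaneMinGraph 4) (a : Plane) : Plane := (endE G (a, theNbr G a)).2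

lemma pend_mem {a : Plane} (ha : a ∈ G.attach) : pend G a ∈ G.attach :=
  (endE_spec (theNbr_adj ha)).2

lemma pend_rev {a : Plane} (ha : a ∈ G.attach) :
    Relation.ReflTransGen (Step G) (pend G a, theNbr G (pend G a)) (theNbr G a, a) := by
  have hadj : G.adj (a, theNbr G a).1 (a, theNbr G a).2 := theNbr_adj ha
  have h1 := endE_spec hadj
  have hrev := rtg_rev h1.1
  have hadj2 : G.adj (endE G (a, theNbr G a)).1 (endE G (a, theNbr G a)).2 :=
    rtg_adj h1.1 hadj
  have hw : (endE G (a, theNbr G a)).1 = theNbr G (pend G a) :=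
    theNbr_unique h1.2 (G.adj_symm hadj2)
  rw [hw] at hrev
  exact hrev

lemma pend_pend {a : Plane} (ha : a ∈ G.attach) : pend G (pend G a) = a := by
  have h := endE_eq (theNbr_adj (pend_mem ha)) (pend_rev ha) ha
  rw [pend, h]

lemma pend_ne {a : Plane} (ha : a ∈ G.attach) : pend G a ≠ a := by
  have hadj : G.adj (a, theNbr G a).1 (a, theNbr G a).2 := theNbr_adj ha
  have h1 := endE_spec hadj
  have hpos := rtg_pos h1.1 hadj
  intro hh
  rw [show (endE G (a, theNbr G a)).2 = pend G a from rfl, hh] at hpos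
  simp at hpos

/-- The pair of endpoints of the straight line through an attaching point. -/
def lineOf (G : PlaneMinGraph 4) (a : Plane) : Finset Plane := {a, pend G a}

lemma mem_lineOf_self (a : Plane) : a ∈ lineOf G a := by simp [lineOf]

lemma lineOf_pend {a : Plane} (ha : a ∈ G.attach) : lineOf G (pend G a) = lineOf G a := by
  rw [lineOf, lineOf, pend_pend ha, Finset.pair_comm]

lemma lineOf_eq_of_mem {a x : Plane} (ha : a ∈ G.attach) (hx : x ∈ lineOf G a) :
    lineOf G x = lineOf G a := by
  rcases Finset.mem_insert.1 hx with h | h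
  · rw [h]
  · rw [Finset.mem_singleton.1 h, lineOf_pend ha]

/-- The set of straight lines of the graph. -/
def lines (G : PlaneMinGraph 4) : Finset (Finset Plane) := G.attach.image (lineOf G)

lemma lineOf_subset {a : Plane} (ha : a ∈ G.attach) : lineOf G a ⊆ G.attach := by
  intro x hx
  rcases Finset.mem_insert.1 hx with h | h
  · rw [h]; exact ha
  · rw [Finset.mem_singleton.1 h]; exact pend_mem ha

lemma card_attach_eq_two_mul : G.attach.card = 2 * (lines G).card := by
  classical
  have hdisj : ∀ ℓ₁ ∈ lines G, ∀ ℓ₂ ∈ lines G, ℓ₁ ≠ ℓ₂ → Disjoint ℓ₁ ℓ₂ := by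
    intro ℓ₁ h₁ ℓ₂ h₂ hne
    obtain ⟨a, ha, rfl⟩ := Finset.mem_image.1 h₁
    obtain ⟨b, hb, rfl⟩ := Finset.mem_image.1 h₂
    rw [Finset.disjoint_left]
    intro x hx₁ hx₂
    exact hne ((lineOf_eq_of_mem ha hx₁).symm.trans (lineOf_eq_of_mem hb hx₂))
  have hU : (lines G).biUnion (fun ℓ => ℓ) = G.attach := by
    ext x
    simp only [Finset.mem_biUnion]
    constructor
    · rintro ⟨ℓ, hℓ, hx⟩
      obtain ⟨a, ha, rfl⟩ := Finset.mem_image.1 hℓ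
      exact lineOf_subset ha hx
    · intro hx
      exact ⟨lineOf G x, Finset.mem_image_of_mem _ hx, mem_lineOf_self x⟩
  have hcard : ∀ ℓ ∈ lines G, ℓ.card = 2 := by
    intro ℓ hℓ
    obtain ⟨a, ha, rfl⟩ := Finset.mem_image.1 hℓ
    rw [lineOf, Finset.card_insert_of_notMem (by simp; exact fun hh => (pend_ne ha) hh.symm),
      Finset.card_singleton]
  rw [← hU, Finset.card_biUnion hdisj, Finset.sum_congr rfl hcard, Finset.sum_const,
    smul_eq_mul, mul_comm]

/-- The line through the edge `(v,u)`, recorded by its endpoint pair. -/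
def lineThru (G : PlaneMinGraph 4) (v u : Plane) : Finset Plane :=
  lineOf G ((endE G (v, u)).2)

lemma lineThru_mem_lines {v u : Plane} (hu : G.adj v u) : lineThru G v u ∈ lines G :=
  Finset.mem_image_of_mem _ (endE_spec (e := (v, u)) hu).2

lemma rev_reach {v u : Plane} (hu : G.adj v u) :
    Relation.ReflTransGen (Step G)
      ((endE G (v, u)).2, theNbr G ((endE G (v, u)).2)) (u, v) := by
  have h1 := endE_spec (e := (v, u)) hu
  have hrev := rtg_rev h1.1
  have hadj2 : G.adj (endE G (v, u)).1 (endE G (v, u)).2 := rtg_adj h1.1 hu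
  have hw : (endE G (v, u)).1 = theNbr G ((endE G (v, u)).2) :=
    theNbr_unique h1.2 (G.adj_symm hadj2)
  rw [hw] at hrev
  exact hrev

set_option maxHeartbeats 1000000 in
lemma line_dir {v u : Plane} (hu : G.adj v u) :
    udir u v = udir ((endE G (v, u)).2) (theNbr G ((endE G (v, u)).2)) := by
  have h := rtg_dir (rev_reach hu)
  exact h

lemma line_collin {v u : Plane} (hu : G.adj v u) :
    ∃ s : ℝ, v - (endE G (v, u)).2 = s • udir u v := by
  obtain ⟨t, ht⟩ := rtg_collin (rev_reach hu)
  exact ⟨t, by rw [line_dir hu]; exact ht⟩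

lemma opp_endE {v u w : Plane} (hvA : v ∉ G.attach) (hu : G.adj v u) (hw : G.adj v w)
    (hdir : udir v w = - udir v u) :
    (endE G (v, w)).2 = pend G ((endE G (v, u)).2) := by
  have h1 := endE_spec (e := (v, u)) hu
  have hrev := rev_reach hu
  have hstep : Step G (u, v) (v, w) := by
    refine ⟨G.adj_symm hu, hw, rfl, hvA, ?_⟩
    show udir v w = udir u v
    rw [hdir]
    exact (udir_symm v u).symm
  have h2 := endE_spec (e := (v, w)) hw
  have hchain := (hrev.tail hstep).trans h2.1
  have := endE_eq (theNbr_adj h1.2) hchain h2.2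
  rw [pend, this]

lemma lineThru_opp {v u w : Plane} (hvA : v ∉ G.attach) (hu : G.adj v u) (hw : G.adj v w)
    (hdir : udir v w = - udir v u) : lineThru G v w = lineThru G v u := by
  rw [lineThru, lineThru, opp_endE hvA hu hw hdir,
    lineOf_pend (endE_spec (e := (v, u)) hu).2]

lemma lineThru_ne {v u x : Plane} (hv : v ∈ G.verts) (hvA : v ∉ G.attach)
    (hu : G.adj v u) (hx : G.adj v x) (h1 : udir v x ≠ udir v u)
    (h2 : udir v x ≠ - udir v u) : lineThru G v x ≠ lineThru G v u := by
  intro hEq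
  have hbA := (endE_spec (e := (v, u)) hu).2
  have hcA := (endE_spec (e := (v, x)) hx).2
  have hmem : (endE G (v, x)).2 ∈ lineOf G ((endE G (v, u)).2) := by
    show (endE G (v, x)).2 ∈ lineThru G v u
    rw [← hEq]
    exact mem_lineOf_self _
  have hdirxy : ∀ y : Plane, G.adj v y →
      (endE G (v, x)).2 = (endE G (v, y)).2 → udir v x = udir v y := by
    intro y hy hcb
    have hrevu := rev_reach hy
    have hrevx := rev_reach hx
    rw [hcb] at hrevx
    have hdd : udir x v = udir y v := by
      rcases rtg_confl hrevu hrevx with h | h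
      · have := rtg_dir h; rw [this]
      · have := rtg_dir h; rw [this]
    rw [udir_symm v x, udir_symm v y] at hdd
    exact neg_injective hdd
  rcases Finset.mem_insert.1 hmem with hcb | hcb
  · exact h1 (hdirxy u hu hcb)
  · rw [Finset.mem_singleton] at hcb
    obtain ⟨w, hw, hwd⟩ := exists_opp hv hvA hu
    have hpend := opp_endE hvA hu hw hwd
    rw [← hpend] at hcb
    have := hdirxy w hw hcb
    rw [this, hwd] at h2
    exact h2 rfl

lemma exists_two_dirs {v : Plane} (hv : v ∈ G.verts) (hvA : v ∉ G.attach) :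
    ∃ u x, G.adj v u ∧ G.adj v x ∧ udir v x ≠ udir v u ∧ udir v x ≠ - udir v u ∧
      ∀ z, G.adj v z → lineThru G v z = lineThru G v u ∨ lineThru G v z = lineThru G v x := by
  classical
  set s := G.verts.filter (fun u => G.adj v u) with hs
  have hcard : s.card = 4 := G.degree_other v hv hvA
  obtain ⟨u, hu⟩ : s.Nonempty := Finset.card_pos.1 (by omega)
  have hu' : G.adj v u := mem_nbr.1 hu
  obtain ⟨w, hw', hwd⟩ := exists_opp hv hvA hu'
  have hw : w ∈ s := mem_nbr.2 hw'
  have hwu : w ≠ u := by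
    intro hh; rw [hh] at hwd; exact udir_ne_neg (adj_ne hu') hwd
  have hnon : (s \ {u, w}).Nonempty := by
    rw [← Finset.card_pos]
    have h1 : ({u, w} : Finset Plane).card ≤ 2 := (Finset.card_insert_le _ _).trans (by simp)
    have h2 := Finset.le_card_sdiff ({u, w} : Finset Plane) s
    omega
  obtain ⟨x, hxmem⟩ := hnon
  obtain ⟨hx, hxuw⟩ := Finset.mem_sdiff.1 hxmem
  have hx' : G.adj v x := mem_nbr.1 hx
  have hxu : x ≠ u := fun h => hxuw (by simp [h])
  have hxw : x ≠ w := fun h => hxuw (by simp [h])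
  have hdxu : udir v x ≠ udir v u := fun h => hxu (no_overlap hx' hu' h)
  have hdxw : udir v x ≠ - udir v u := by
    intro h
    exact hxw (no_overlap hx' hw' (h.trans hwd.symm))
  obtain ⟨y, hy', hyd⟩ := exists_opp hv hvA hx'
  have hy : y ∈ s := mem_nbr.2 hy'
  have hyu : y ≠ u := by
    intro hh
    rw [hh] at hyd
    apply hdxw
    rw [← neg_neg (udir v x), hyd]
  have hyw : y ≠ w := by
    intro hh
    rw [hh, hwd] at hyd
    exact hdxu (neg_injective hyd).symm
  have hyx : y ≠ x := by
    intro hh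
    rw [hh] at hyd
    exact udir_ne_neg (adj_ne hx') hyd
  have hsub : ({u, w, x, y} : Finset Plane) ⊆ s := by
    intro z hz
    rcases Finset.mem_insert.1 hz with h | h
    · rw [h]; exact hu
    rcases Finset.mem_insert.1 h with h | h
    · rw [h]; exact hw
    rcases Finset.mem_insert.1 h with h | h
    · rw [h]; exact hx
    · rw [Finset.mem_singleton.1 h]; exact hy
  have hcard4 : ({u, w, x, y} : Finset Plane).card = 4 := by
    rw [Finset.card_insert_of_notMem (by simp [hwu.symm, hxu.symm, hyu.symm]),
      Finset.card_insert_of_notMem (by simp [hxw.symm, hyw.symm]),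
      Finset.card_insert_of_notMem (by simp [hyx.symm]), Finset.card_singleton]
  have heq : ({u, w, x, y} : Finset Plane) = s :=
    Finset.eq_of_subset_of_card_le hsub (by omega)
  refine ⟨u, x, hu', hx', hdxu, hdxw, ?_⟩
  intro z hz
  have hzmem : z ∈ ({u, w, x, y} : Finset Plane) := by rw [heq]; exact mem_nbr.2 hz
  rcases Finset.mem_insert.1 hzmem with h | h
  · left; rw [h]
  rcases Finset.mem_insert.1 h with h | h
  · left; rw [h]; exact lineThru_opp hvA hu' hw' hwd
  rcases Finset.mem_insert.1 h with h | h
  · right; rw [h]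
  · right; rw [Finset.mem_singleton.1 h]; exact lineThru_opp hvA hx' hy' hyd

/-- The pair of lines through an interior vertex. -/
def linePair (G : PlaneMinGraph 4) (v : Plane) : Finset (Finset Plane) :=
  (G.verts.filter (fun u => G.adj v u)).image (fun u => lineThru G v u)

lemma linePair_eq {v : Plane} (hv : v ∈ G.verts) (hvA : v ∉ G.attach) :
    ∃ u x, G.adj v u ∧ G.adj v x ∧ udir v x ≠ udir v u ∧ udir v x ≠ - udir v u ∧
      linePair G v = {lineThru G v u, lineThru G v x} := by
  obtain ⟨u, x, hu, hx, h1, h2, hall⟩ := exists_two_dirs hv hvA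
  refine ⟨u, x, hu, hx, h1, h2, ?_⟩
  ext ℓ
  simp only [linePair, Finset.mem_image, Finset.mem_insert, Finset.mem_singleton]
  constructor
  · rintro ⟨z, hz, rfl⟩
    exact hall z (mem_nbr.1 hz)
  · rintro (rfl | rfl)
    · exact ⟨u, mem_nbr.2 hu, rfl⟩
    · exact ⟨x, mem_nbr.2 hx, rfl⟩

lemma linePair_mem_powerset {v : Plane} (hv : v ∈ G.verts) (hvA : v ∉ G.attach) :
    linePair G v ∈ (lines G).powersetCard 2 := by
  obtain ⟨u, x, hu, hx, h1, h2, hLP⟩ := linePair_eq hv hvA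
  rw [Finset.mem_powersetCard, hLP]
  constructor
  · intro ℓ hℓ
    rcases Finset.mem_insert.1 hℓ with h | h
    · rw [h]; exact lineThru_mem_lines hu
    · rw [Finset.mem_singleton.1 h]; exact lineThru_mem_lines hx
  · rw [Finset.card_insert_of_notMem
      (by rw [Finset.mem_singleton]; exact (lineThru_ne hv hvA hu hx h1 h2).symm),
      Finset.card_singleton]

lemma unit_indep {p q : Plane} (hp : ‖p‖ = 1) (hq : ‖q‖ = 1) (h1 : q ≠ p)
    (h2 : q ≠ -p) {t s : ℝ} (h : t • p = s • q) : t = 0 := by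
  by_contra ht
  have hnorm : |t| = |s| := by
    have := congrArg norm h
    rw [norm_smul, norm_smul, hp, hq] at this
    simpa using this
  rcases abs_eq_abs.1 hnorm with hh | hh
  · rw [← hh] at h
    exact h1 ((smul_right_injective Plane ht h)).symm
  · have hs : s = -t := by linarith [hh, neg_neg t]
    rw [hs, neg_smul, ← smul_neg] at h
    have := smul_right_injective Plane ht h
    exact h2 (by rw [this, neg_neg])

lemma collinear_aux {v u v' u' : Plane} (hvA : v ∉ G.attach)
    (hu : G.adj v u) (hu' : G.adj v' u')
    (hL : lineThru G v u = lineThru G v' u') :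
    ∃ t : ℝ, v' - v = t • udir u v := by
  have hbA := (endE_spec (e := (v, u)) hu).2
  obtain ⟨s₀, hs₀⟩ := line_collin hu
  obtain ⟨s₁, hs₁⟩ := line_collin hu'
  have hmem : (endE G (v', u')).2 ∈ lineOf G ((endE G (v, u)).2) := by
    rw [show lineOf G ((endE G (v, u)).2) = lineThru G v u from rfl, hL]
    exact mem_lineOf_self _
  rcases Finset.mem_insert.1 hmem with hbb | hbb
  · -- same endpoint
    have hd : udir u' v' = udir u v := by
      rw [line_dir hu', hbb, ← line_dir hu]
    refine ⟨s₁ - s₀, ?_⟩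
    have hvv : v' - v = (v' - (endE G (v', u')).2) - (v - (endE G (v, u)).2) := by
      rw [hbb]; abel
    rw [hvv, hs₀, hs₁, hd, sub_smul]
  · -- opposite endpoint
    rw [Finset.mem_singleton] at hbb
    obtain ⟨w, hw, hwd⟩ := exists_opp (G.adj_mem hu) hvA hu
    have hpend := opp_endE hvA hu hw hwd
    rw [← hpend] at hbb
    obtain ⟨r, hr⟩ := line_collin hw
    have hd : udir u' v' = udir w v := by
      rw [line_dir hu', hbb, ← line_dir hw]
    have hwv : udir w v = - udir u v := by
      rw [udir_symm v w, hwd, neg_neg]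
      exact udir_symm u v
    refine ⟨r - s₁, ?_⟩
    have hvv : v' - v = (v' - (endE G (v', u')).2) - (v - (endE G (v, w)).2) := by
      rw [hbb]; abel
    rw [hvv, hs₁, hr, hd, hwv, ← sub_smul]
    have hco : s₁ - r = -(r - s₁) := by ring
    rw [hco, neg_smul, smul_neg, neg_neg]

end Infra

namespace PlaneMinGraph

variable {d : ℕ}

/-- A cycle in a minimal graph: a (connected, nonempty) `2`-regular subgraph. -/
structure Cycle (G : PlaneMinGraph d) where
  cadj : Plane → Plane → Prop
  cadj_symm : ∀ {u v}, cadj u v → cadj v u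
  cadj_le : ∀ {u v}, cadj u v → G.adj u v
  support : Finset Plane
  mem_support : ∀ v, v ∈ support ↔ ∃ u, cadj v u
  two_regular : ∀ v ∈ support, (G.verts.filter (fun u => cadj v u)).card = 2
  connected : ∀ u ∈ support, ∀ v ∈ support, Relation.ReflTransGen cadj u v
  support_nonempty : support.Nonempty

variable {G : PlaneMinGraph d}

/-- The simple closed curve in the plane traced by a cycle. -/
def Cycle.curve (C : G.Cycle) : Set Plane :=
  {p | ∃ u v, C.cadj u v ∧ p ∈ segment ℝ u v}

/-- The interior of (the Jordan curve traced by) a cycle: the union of all bounded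
connected subsets of the complement of the curve, i.e. the bounded complementary
component. -/
def Cycle.interior (C : G.Cycle) : Set Plane :=
  ⋃₀ {S : Set Plane | IsConnected S ∧ Bornology.IsBounded S ∧ S ⊆ C.curveᶜ}

/-- A vertex of a cycle is ingoing if the unique edge at it not belonging to the cycle
points into (the closure of) the interior of the cycle. -/
def Cycle.Ingoing (C : G.Cycle) (v : Plane) : Prop :=
  v ∈ C.support ∧ ∃ u, G.adj v u ∧ ¬ C.cadj v u ∧ segment ℝ v u ⊆ closure C.interior

/-- A vertex of a cycle which is not ingoing is outgoing. -/
def Cycle.Outgoing (C : G.Cycle) (v : Plane) : Prop :=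
  v ∈ C.support ∧ ¬ C.Ingoing v

/-- The number of ingoing vertices of a cycle. -/
def Cycle.Vin (C : G.Cycle) : ℕ := (C.support.filter (fun v => C.Ingoing v)).card

/-- The number of outgoing vertices of a cycle. -/
def Cycle.Vout (C : G.Cycle) : ℕ := (C.support.filter (fun v => C.Outgoing v)).card

/-- A cycle is maximal if its interior is maximal with respect to inclusion. -/
def Cycle.IsMaximal (C : G.Cycle) : Prop :=
  ∀ C' : G.Cycle, C.interior ⊆ C'.interior → C'.interior ⊆ C.interior

end PlaneMinGraph

/-- `f₃ n` is the supremum (in `ℕ∞`) of the numbers of vertices of `3`-regular minimal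
graphs in the plane with `n` attaching points. -/
def f3 (n : ℕ) : ℕ∞ :=
  ⨆ (G : PlaneMinGraph 3) (_ : G.attach.card = n), (G.verts.card : ℕ∞)

/-- Theorem 1.2 (upper bound): a `4`-regular minimal graph in the plane with `n`
attaching points has even `n` and at most `C(n/2, 2) + n` vertices. -/
theorem four_regular_vertex_bound (G : PlaneMinGraph 4) (n : ℕ)
    (hn : G.attach.card = n) :
    Even n ∧ G.verts.card ≤ Nat.choose (n / 2) 2 + n := by
  classical
  have h2m : G.attach.card = 2 * (lines G).card := card_attach_eq_two_mul
  have heven : Even n := ⟨(lines G).card, by omega⟩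
  refine ⟨heven, ?_⟩
  have hm : (lines G).card = n / 2 := by omega
  set I : Finset Plane := G.verts \ G.attach with hI
  have hinj : Set.InjOn (linePair G) I := by
    intro v hv v' hv' hEq
    have hv1 := Finset.mem_sdiff.1 (Finset.mem_coe.1 hv)
    have hv2 := Finset.mem_sdiff.1 (Finset.mem_coe.1 hv')
    obtain ⟨u, x, hu, hx, hd1, hd2, hLP⟩ := linePair_eq hv1.1 hv1.2
    have hmemu : lineThru G v u ∈ linePair G v' := by rw [← hEq, hLP]; simp
    have hmemx : lineThru G v x ∈ linePair G v' := by rw [← hEq, hLP]; simp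
    obtain ⟨u', hu', hLu⟩ := Finset.mem_image.1 hmemu
    obtain ⟨x', hx', hLx⟩ := Finset.mem_image.1 hmemx
    obtain ⟨t₁, ht₁⟩ := collinear_aux hv1.2 hu (mem_nbr.1 hu') hLu.symm
    obtain ⟨t₂, ht₂⟩ := collinear_aux hv1.2 hx (mem_nbr.1 hx') hLx.symm
    have hp : ‖udir u v‖ = 1 := norm_udir (adj_ne hu).symm
    have hq : ‖udir x v‖ = 1 := norm_udir (adj_ne hx).symm
    have hne1 : udir x v ≠ udir u v := by
      intro h
      apply hd1
      rw [udir_symm v x, udir_symm v u] at h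
      exact neg_injective h
    have hne2 : udir x v ≠ -udir u v := by
      intro h
      apply hd2
      rw [udir_symm v x, udir_symm v u, neg_neg] at h
      simpa using congrArg Neg.neg h
    have hteq : t₁ • udir u v = t₂ • udir x v := by rw [← ht₁, ← ht₂]
    have ht0 : t₁ = 0 := unit_indep hp hq hne1 hne2 hteq
    have h0 : v' - v = 0 := by rw [ht₁, ht0, zero_smul]
    exact (sub_eq_zero.1 h0).symm
  have hmaps : ∀ v ∈ I, linePair G v ∈ (lines G).powersetCard 2 := fun v hv =>
    linePair_mem_powerset (Finset.mem_sdiff.1 hv).1 (Finset.mem_sdiff.1 hv).2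
  have hcardI : I.card ≤ ((lines G).powersetCard 2).card :=
    Finset.card_le_card_of_injOn _ hmaps hinj
  rw [Finset.card_powersetCard, hm] at hcardI
  have hsub := G.attach_subset
  have hIcard : I.card = G.verts.card - n := by rw [hI, Finset.card_sdiff_of_subset hsub, hn]
  have hle : n ≤ G.verts.card := hn ▸ Finset.card_le_card hsub
  omega


end
end

section
/- For every even n ≥ 2 there exists a 4-regular minimal graph in the plane with n attaching points whose number of vertices equals C(n/2, 2) + n, where C(m, 2) = m(m−1)/2 is the binomial coefficient. -/
open scoped Classical
noncomputable section

namespace Sharp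

noncomputable def pt (x y : ℝ) : Plane := WithLp.toLp 2 ![x, y]
noncomputable def dv (i : ℕ) : Plane := pt 1 (2*i)
noncomputable def q (i : ℕ) (s : ℝ) : Plane := pt s (2*i*s - (i:ℝ)^2)

lemma plane_ext {p r : Plane} (h0 : p 0 = r 0) (h1 : p 1 = r 1) : p = r := by
  apply PiLp.ext; intro i; fin_cases i <;> assumption

lemma q_sub (i : ℕ) (s s' : ℝ) : q i s - q i s' = (s - s') • dv i := by
  apply plane_ext
  · show s - s' = (s - s') * 1; ring
  · show (2*i*s - (i:ℝ)^2) - (2*i*s' - (i:ℝ)^2) = (s - s') * (2*i); ring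

lemma dv_ne (i : ℕ) : dv i ≠ 0 := by
  intro h
  have : (1:ℝ) = 0 := congrArg (fun p : Plane => p 0) h
  norm_num at this

lemma q_inj {i : ℕ} {s s' : ℝ} (h : q i s = q i s') : s = s' := congrArg (fun p : Plane => p 0) h

lemma q_eq_q {i j : ℕ} {s s' : ℝ} (hij : i ≠ j) (h : q i s = q j s') :
    s = s' ∧ s = ((i:ℝ)+j)/2 := by
  have h0 : s = s' := congrArg (fun p : Plane => p 0) h
  have h1 : 2*(i:ℝ)*s - (i:ℝ)^2 = 2*(j:ℝ)*s' - (j:ℝ)^2 := congrArg (fun p : Plane => p 1) h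
  refine ⟨h0, ?_⟩
  have hij' : (i:ℝ) ≠ j := by exact_mod_cast hij
  have h2 : ((i:ℝ) - j) * (2*s - ((i:ℝ)+j)) = 0 := by rw [h0] at h1 ⊢; linarith [h1]
  rcases mul_eq_zero.1 h2 with h3 | h3
  · exact absurd (by linarith : (i:ℝ) = j) hij'
  · linarith

lemma q_cross_comm (i j : ℕ) : q i (((i:ℝ)+j)/2) = q j (((i:ℝ)+j)/2) := by
  apply plane_ext
  · rfl
  · show 2*(i:ℝ)*(((i:ℝ)+j)/2) - (i:ℝ)^2 = 2*(j:ℝ)*(((i:ℝ)+j)/2) - (j:ℝ)^2; ring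

def S (m i : ℕ) : Finset ℝ :=
  insert (-(m:ℝ)) (insert (m:ℝ) (((Finset.range m).erase i).image (fun j : ℕ => ((i:ℝ)+j)/2)))

lemma mem_S {m i : ℕ} {r : ℝ} :
    r ∈ S m i ↔ r = -(m:ℝ) ∨ r = (m:ℝ) ∨ ∃ j, j < m ∧ j ≠ i ∧ r = ((i:ℝ)+j)/2 := by
  simp only [S, Finset.mem_insert, Finset.mem_image, Finset.mem_erase, Finset.mem_range]
  constructor
  · rintro (h | h | ⟨j, ⟨hj1, hj2⟩, hj3⟩)
    · exact Or.inl h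
    · exact Or.inr (Or.inl h)
    · exact Or.inr (Or.inr ⟨j, hj2, hj1, hj3.symm⟩)
  · rintro (h | h | ⟨j, hj1, hj2, hj3⟩)
    · exact Or.inl h
    · exact Or.inr (Or.inl h)
    · exact Or.inr (Or.inr ⟨j, ⟨hj2, hj1⟩, hj3.symm⟩)

lemma S_bounds {m i : ℕ} (hm : 1 ≤ m) (hi : i < m) {r : ℝ} (hr : r ∈ S m i) :
    -(m:ℝ) ≤ r ∧ r ≤ (m:ℝ) := by
  have hm' : (1:ℝ) ≤ m := by exact_mod_cast hm
  rcases mem_S.1 hr with h | h | ⟨j, hj1, _, h⟩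
  · constructor <;> simp [h]
  · constructor <;> simp [h]
  · have hi' : (i:ℝ) ≤ m - 1 := by
      have h5 : (i:ℝ) + 1 ≤ m := by exact_mod_cast hi
      linarith
    have hj' : (j:ℝ) ≤ m - 1 := by
      have h5 : (j:ℝ) + 1 ≤ m := by exact_mod_cast hj1
      linarith
    constructor
    · have : (0:ℝ) ≤ ((i:ℝ)+j)/2 := by positivity
      rw [h]; linarith
    · rw [h]; linarith

end Sharp

namespace Sharp

lemma cross_mem_S {m i j : ℕ} (hj : j < m) (hij : j ≠ i) : ((i:ℝ)+j)/2 ∈ S m i :=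
  mem_S.2 (Or.inr (Or.inr ⟨j, hj, hij, rfl⟩))

lemma neg_m_mem_S {m i : ℕ} : -(m:ℝ) ∈ S m i := mem_S.2 (Or.inl rfl)
lemma m_mem_S {m i : ℕ} : (m:ℝ) ∈ S m i := mem_S.2 (Or.inr (Or.inl rfl))

lemma cross_lt {m i j : ℕ} (hi : i < m) (hj : j < m) :
    -(m:ℝ) < ((i:ℝ)+j)/2 ∧ ((i:ℝ)+j)/2 < (m:ℝ) := by
  have h1 : (i:ℝ) + 1 ≤ m := by exact_mod_cast hi
  have h2 : (j:ℝ) + 1 ≤ m := by exact_mod_cast hj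
  have h0 : (0:ℝ) ≤ (i:ℝ)+(j:ℝ) := by positivity
  constructor <;> [linarith; linarith]

def pairs (m : ℕ) : Finset (ℕ × ℕ) :=
  (Finset.range m ×ˢ Finset.range m).filter (fun p => p.1 < p.2)

def crossings (m : ℕ) : Finset Plane :=
  (pairs m).image (fun p => q p.1 (((p.1:ℝ)+p.2)/2))

def attachS (m : ℕ) : Finset Plane :=
  ((Finset.range m).image (fun i => q i (-(m:ℝ)))) ∪
    ((Finset.range m).image (fun i => q i (m:ℝ)))

def vertsS (m : ℕ) : Finset Plane := crossings m ∪ attachS m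

lemma mem_vertsS {m : ℕ} {v : Plane} :
    v ∈ vertsS m ↔ ∃ i, i < m ∧ ∃ s ∈ S m i, v = q i s := by
  simp only [vertsS, crossings, attachS, pairs, Finset.mem_union, Finset.mem_image,
    Finset.mem_filter, Finset.mem_product, Finset.mem_range]
  constructor
  · rintro ((⟨⟨i, j⟩, ⟨⟨hi, hj⟩, hlt⟩, rfl⟩) | (⟨i, hi, rfl⟩) | (⟨i, hi, rfl⟩))
    · exact ⟨i, hi, ((i:ℝ)+j)/2, cross_mem_S hj (Nat.ne_of_gt hlt), rfl⟩
    · exact ⟨i, hi, -(m:ℝ), neg_m_mem_S, rfl⟩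
    · exact ⟨i, hi, (m:ℝ), m_mem_S, rfl⟩
  · rintro ⟨i, hi, s, hs, rfl⟩
    rcases mem_S.1 hs with h | h | ⟨j, hj1, hj2, h⟩
    · exact Or.inr (Or.inl ⟨i, hi, by rw [h]⟩)
    · exact Or.inr (Or.inr ⟨i, hi, by rw [h]⟩)
    · subst h
      rcases lt_or_gt_of_ne hj2 with hlt | hlt
      · refine Or.inl ⟨(j, i), ⟨⟨hj1, hi⟩, hlt⟩, ?_⟩
        show q j (((j:ℝ)+i)/2) = q i (((i:ℝ)+j)/2)
        have h6 : ((j:ℝ)+i)/2 = ((i:ℝ)+j)/2 := by ring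
        rw [h6]
        exact (q_cross_comm i j).symm
      · exact Or.inl ⟨(i, j), ⟨⟨hi, hj1⟩, hlt⟩, rfl⟩

def adjS (m : ℕ) (u v : Plane) : Prop :=
  ∃ i, i < m ∧ ∃ s ∈ S m i, ∃ s' ∈ S m i, s < s' ∧
    (∀ r ∈ S m i, ¬(s < r ∧ r < s')) ∧
    ((u = q i s ∧ v = q i s') ∨ (u = q i s' ∧ v = q i s))

end Sharp

namespace Sharp

/-- Build an adjacency from consecutive parameters on a line. -/
lemma adj_of_consec {m i : ℕ} (hi : i < m) {s s' : ℝ} (hs : s ∈ S m i) (hs' : s' ∈ S m i)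
    (hlt : s < s') (hcons : ∀ r ∈ S m i, ¬(s < r ∧ r < s')) :
    adjS m (q i s) (q i s') :=
  ⟨i, hi, s, hs, s', hs', hlt, hcons, Or.inl ⟨rfl, rfl⟩⟩

lemma adjS_symm {m : ℕ} {u v : Plane} (h : adjS m u v) : adjS m v u := by
  obtain ⟨i, hi, s, hs, s', hs', hlt, hcons, hor⟩ := h
  refine ⟨i, hi, s, hs, s', hs', hlt, hcons, ?_⟩
  rcases hor with ⟨h1, h2⟩ | ⟨h1, h2⟩
  · exact Or.inr ⟨h2, h1⟩
  · exact Or.inl ⟨h2, h1⟩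

/-- Extraction: any adjacency of `v` comes from a line through `v`. -/
lemma adj_extract {m : ℕ} {v u : Plane} (h : adjS m v u) :
    ∃ k, k < m ∧ ∃ t ∈ S m k, ∃ t' ∈ S m k, t ≠ t' ∧
      (∀ r ∈ S m k, ¬(min t t' < r ∧ r < max t t')) ∧ v = q k t ∧ u = q k t' := by
  obtain ⟨i, hi, s, hs, s', hs', hlt, hcons, hor⟩ := h
  rcases hor with ⟨hv, hu⟩ | ⟨hv, hu⟩
  · refine ⟨i, hi, s, hs, s', hs', ne_of_lt hlt, ?_, hv, hu⟩
    rwa [min_eq_left hlt.le, max_eq_right hlt.le]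
  · refine ⟨i, hi, s', hs', s, hs, (ne_of_lt hlt).symm, ?_, hv, hu⟩
    rwa [min_eq_right hlt.le, max_eq_left hlt.le]

lemma adjS_irrefl {m : ℕ} (v : Plane) : ¬ adjS m v v := by
  intro h
  obtain ⟨k, _, t, _, t', _, hne, _, hv, hu⟩ := adj_extract h
  exact hne (q_inj (hv.symm.trans hu))

lemma adjS_mem {m : ℕ} {u v : Plane} (h : adjS m u v) : u ∈ vertsS m := by
  obtain ⟨i, hi, s, hs, s', hs', hlt, hcons, hor⟩ := h
  rcases hor with ⟨hv, _⟩ | ⟨hv, _⟩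
  · exact mem_vertsS.2 ⟨i, hi, s, hs, hv⟩
  · exact mem_vertsS.2 ⟨i, hi, s', hs', hv⟩

/-- An endpoint vertex lies on exactly one line. -/
lemma endpoint_line {m i k : ℕ} (hi : i < m) (hk : k < m) {t : ℝ}
    (h : q i (m:ℝ) = q k t ∨ q i (-(m:ℝ)) = q k t) : k = i := by
  by_contra hne
  have hne' : i ≠ k := fun h' => hne h'.symm
  have h1 : (i:ℝ) + 1 ≤ m := by exact_mod_cast hi
  have h2 : (k:ℝ) + 1 ≤ m := by exact_mod_cast hk
  rcases h with h | h
  · have := (q_eq_q hne' h).2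
    linarith [this]
  · have := (q_eq_q hne' h).2
    have h0 : (0:ℝ) ≤ (i:ℝ)+(k:ℝ) := by positivity
    linarith [this]

/-- A crossing vertex lies only on its two lines, with the same parameter. -/
lemma crossing_line {m i j k : ℕ} (hi : i < m) (hj : j < m) (hij : i ≠ j) (hk : k < m) {t : ℝ}
    (h : q i (((i:ℝ)+j)/2) = q k t) : (k = i ∨ k = j) ∧ t = ((i:ℝ)+j)/2 := by
  by_cases hki : k = i
  · subst hki
    exact ⟨Or.inl rfl, (q_inj h).symm⟩
  · have hik : i ≠ k := fun h' => hki h'.symm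
    obtain ⟨h1, h2⟩ := q_eq_q hik h
    have : ((i:ℝ)+j)/2 = ((i:ℝ)+k)/2 := h2
    have hjk : (j:ℝ) = k := by linarith
    have : j = k := by exact_mod_cast hjk
    exact ⟨Or.inr this.symm, h1.symm⟩

end Sharp

namespace Sharp

lemma exists_succ {m i : ℕ} {s : ℝ} (hsm : s < (m:ℝ)) :
    ∃ b ∈ S m i, s < b ∧ ∀ r ∈ S m i, s < r → b ≤ r := by
  have hT : ((S m i).filter (fun r => s < r)).Nonempty :=
    ⟨(m:ℝ), Finset.mem_filter.2 ⟨m_mem_S, hsm⟩⟩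
  set b := ((S m i).filter (fun r => s < r)).min' hT with hb
  have hbm := Finset.min'_mem _ hT
  rw [Finset.mem_filter] at hbm
  refine ⟨b, hbm.1, hbm.2, fun r hr hsr => ?_⟩
  exact Finset.min'_le _ r (Finset.mem_filter.2 ⟨hr, hsr⟩)

lemma exists_pred {m i : ℕ} {s : ℝ} (hsm : -(m:ℝ) < s) :
    ∃ a ∈ S m i, a < s ∧ ∀ r ∈ S m i, r < s → r ≤ a := by
  have hT : ((S m i).filter (fun r => r < s)).Nonempty :=
    ⟨-(m:ℝ), Finset.mem_filter.2 ⟨neg_m_mem_S, hsm⟩⟩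
  have ham := Finset.max'_mem _ hT
  rw [Finset.mem_filter] at ham
  refine ⟨((S m i).filter (fun r => r < s)).max' hT, ham.1, ham.2, fun r hr hsr => ?_⟩
  exact Finset.le_max' ((S m i).filter (fun x => x < s)) r (Finset.mem_filter.2 ⟨hr, hsr⟩)

/-- The neighbour filter of a top attaching point is a singleton. -/
lemma filter_attach_top {m i : ℕ} (hm : 1 ≤ m) (hi : i < m) :
    ∃ w, (vertsS m).filter (fun u => adjS m (q i (m:ℝ)) u) = {w} := by
  have hmm : -(m:ℝ) < (m:ℝ) := by
    have : (1:ℝ) ≤ m := by exact_mod_cast hm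
    linarith
  obtain ⟨a, haS, halt, hamax⟩ := exists_pred (i := i) hmm
  refine ⟨q i a, ?_⟩
  ext u
  simp only [Finset.mem_filter, Finset.mem_singleton]
  constructor
  · rintro ⟨hu, hadj⟩
    obtain ⟨k, hk, t, ht, t', ht', hne, hcons, hv, hu'⟩ := adj_extract hadj
    have hki : k = i := endpoint_line hi hk (Or.inl hv)
    subst hki
    have ht_eq : (m:ℝ) = t := q_inj hv
    subst ht_eq
    have ht'le : t' ≤ (m:ℝ) := (S_bounds hm hk ht').2
    have ht'lt : t' < (m:ℝ) := lt_of_le_of_ne ht'le (fun h => hne h.symm)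
    have ht'a : t' ≤ a := hamax t' ht' ht'lt
    have : t' = a := by
      rcases eq_or_lt_of_le ht'a with h | h
      · exact h
      · exact absurd ⟨by rw [min_eq_right ht'lt.le]; exact h,
          by rw [max_eq_left ht'lt.le]; exact halt⟩ (hcons a haS)
    rw [hu', this]
  · rintro rfl
    refine ⟨mem_vertsS.2 ⟨i, hi, a, haS, rfl⟩, adjS_symm (adj_of_consec hi haS m_mem_S halt ?_)⟩
    intro r hr ⟨h1, h2⟩
    exact absurd (hamax r hr h2) (not_le.2 h1)

/-- The neighbour filter of a bottom attaching point is a singleton. -/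
lemma filter_attach_bot {m i : ℕ} (hm : 1 ≤ m) (hi : i < m) :
    ∃ w, (vertsS m).filter (fun u => adjS m (q i (-(m:ℝ))) u) = {w} := by
  have hmm : -(m:ℝ) < (m:ℝ) := by
    have : (1:ℝ) ≤ m := by exact_mod_cast hm
    linarith
  obtain ⟨b, hbS, hblt, hbmin⟩ := exists_succ (i := i) hmm
  refine ⟨q i b, ?_⟩
  ext u
  simp only [Finset.mem_filter, Finset.mem_singleton]
  constructor
  · rintro ⟨hu, hadj⟩
    obtain ⟨k, hk, t, ht, t', ht', hne, hcons, hv, hu'⟩ := adj_extract hadj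
    have hki : k = i := endpoint_line hi hk (Or.inr hv)
    subst hki
    have ht_eq : -(m:ℝ) = t := q_inj hv
    subst ht_eq
    have ht'le : -(m:ℝ) ≤ t' := (S_bounds hm hk ht').1
    have ht'lt : -(m:ℝ) < t' := lt_of_le_of_ne ht'le hne
    have ht'b : b ≤ t' := hbmin t' ht' ht'lt
    have : t' = b := by
      rcases eq_or_lt_of_le ht'b with h | h
      · exact h.symm
      · exact absurd ⟨by rw [min_eq_left ht'lt.le]; exact hblt,
          by rw [max_eq_right ht'lt.le]; exact h⟩ (hcons b hbS)
    rw [hu', this]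
  · rintro rfl
    refine ⟨mem_vertsS.2 ⟨i, hi, b, hbS, rfl⟩, adj_of_consec hi neg_m_mem_S hbS hblt ?_⟩
    intro r hr ⟨h1, h2⟩
    exact absurd (hbmin r hr h1) (not_le.2 h2)

end Sharp

namespace Sharp

lemma cross_mem_S' {m i j : ℕ} (hi : i < m) (hij : i ≠ j) : ((i:ℝ)+j)/2 ∈ S m j := by
  have : ((i:ℝ)+j)/2 = ((j:ℝ)+i)/2 := by ring
  rw [this]
  exact cross_mem_S hi hij

lemma filter_crossing {m i j : ℕ} (hm : 1 ≤ m) (hi : i < m) (hj : j < m) (hij : i ≠ j) :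
    ∃ a b c d : ℝ,
      a ∈ S m i ∧ b ∈ S m i ∧ c ∈ S m j ∧ d ∈ S m j ∧
      a < ((i:ℝ)+j)/2 ∧ ((i:ℝ)+j)/2 < b ∧ c < ((i:ℝ)+j)/2 ∧ ((i:ℝ)+j)/2 < d ∧
      (vertsS m).filter (fun u => adjS m (q i (((i:ℝ)+j)/2)) u) =
        {q i a, q i b, q j c, q j d} := by
  set s : ℝ := ((i:ℝ)+j)/2 with hs_def
  obtain ⟨hlo, hhi⟩ := cross_lt hi hj
  have hsSi : s ∈ S m i := cross_mem_S hj (fun h => hij h.symm)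
  have hsSj : s ∈ S m j := cross_mem_S' hi hij
  obtain ⟨a, haS, halt, hamax⟩ := exists_pred (i := i) hlo
  obtain ⟨b, hbS, hblt, hbmin⟩ := exists_succ (i := i) hhi
  obtain ⟨c, hcS, hclt, hcmax⟩ := exists_pred (i := j) hlo
  obtain ⟨d, hdS, hdlt, hdmin⟩ := exists_succ (i := j) hhi
  have hcc : q i s = q j s := q_cross_comm i j
  refine ⟨a, b, c, d, haS, hbS, hcS, hdS, halt, hblt, hclt, hdlt, ?_⟩
  ext u
  simp only [Finset.mem_filter, Finset.mem_insert, Finset.mem_singleton]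
  constructor
  · rintro ⟨hu, hadj⟩
    obtain ⟨k, hk, t, ht, t', ht', hne, hcons, hv, hu'⟩ := adj_extract hadj
    obtain ⟨hkor, hts⟩ := crossing_line hi hj hij hk hv
    subst hts
    rcases hkor with rfl | rfl
    · rcases lt_or_gt_of_ne (fun h => hne h.symm : t' ≠ s) with hlt | hgt
      · left
        have h1 : t' ≤ a := hamax t' ht' hlt
        have : t' = a := by
          rcases eq_or_lt_of_le h1 with h | h
          · exact h
          · exact absurd ⟨by rw [min_eq_right hlt.le]; exact h,
              by rw [max_eq_left hlt.le]; exact halt⟩ (hcons a haS)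
        rw [hu', this]
      · right; left
        have h1 : b ≤ t' := hbmin t' ht' hgt
        have : t' = b := by
          rcases eq_or_lt_of_le h1 with h | h
          · exact h.symm
          · exact absurd ⟨by rw [min_eq_left hgt.le]; exact hblt,
              by rw [max_eq_right hgt.le]; exact h⟩ (hcons b hbS)
        rw [hu', this]
    · rcases lt_or_gt_of_ne (fun h => hne h.symm : t' ≠ s) with hlt | hgt
      · right; right; left
        have h1 : t' ≤ c := hcmax t' ht' hlt
        have : t' = c := by
          rcases eq_or_lt_of_le h1 with h | h
          · exact h
          · exact absurd ⟨by rw [min_eq_right hlt.le]; exact h,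
              by rw [max_eq_left hlt.le]; exact hclt⟩ (hcons c hcS)
        rw [hu', this]
      · right; right; right
        have h1 : d ≤ t' := hdmin t' ht' hgt
        have : t' = d := by
          rcases eq_or_lt_of_le h1 with h | h
          · exact h.symm
          · exact absurd ⟨by rw [min_eq_left hgt.le]; exact hdlt,
              by rw [max_eq_right hgt.le]; exact h⟩ (hcons d hdS)
        rw [hu', this]
  · rintro (rfl | rfl | rfl | rfl)
    · refine ⟨mem_vertsS.2 ⟨i, hi, a, haS, rfl⟩,
        adjS_symm (adj_of_consec hi haS hsSi halt ?_)⟩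
      intro r hr ⟨h1, h2⟩
      exact absurd (hamax r hr h2) (not_le.2 h1)
    · refine ⟨mem_vertsS.2 ⟨i, hi, b, hbS, rfl⟩,
        adj_of_consec hi hsSi hbS hblt ?_⟩
      intro r hr ⟨h1, h2⟩
      exact absurd (hbmin r hr h1) (not_le.2 h2)
    · refine ⟨mem_vertsS.2 ⟨j, hj, c, hcS, rfl⟩, ?_⟩
      rw [hcc]
      refine adjS_symm (adj_of_consec hj hcS hsSj hclt ?_)
      intro r hr ⟨h1, h2⟩
      exact absurd (hcmax r hr h2) (not_le.2 h1)
    · refine ⟨mem_vertsS.2 ⟨j, hj, d, hdS, rfl⟩, ?_⟩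
      rw [hcc]
      refine adj_of_consec hj hsSj hdS hdlt ?_
      intro r hr ⟨h1, h2⟩
      exact absurd (hdmin r hr h1) (not_le.2 h2)

end Sharp

namespace Sharp

lemma unit_pair {i : ℕ} {s a b : ℝ} (ha : a < s) (hb : s < b) :
    ‖q i a - q i s‖⁻¹ • (q i a - q i s) + ‖q i b - q i s‖⁻¹ • (q i b - q i s) = 0 := by
  have hd : ‖dv i‖ ≠ 0 := norm_ne_zero_iff.2 (dv_ne i)
  rw [q_sub, q_sub, norm_smul, norm_smul, smul_smul, smul_smul, ← add_smul]
  convert zero_smul ℝ (dv i) using 2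
  rw [Real.norm_eq_abs, Real.norm_eq_abs, abs_of_neg (by linarith : a - s < 0),
    abs_of_pos (by linarith : 0 < b - s)]
  have h1 : s - a ≠ 0 := ne_of_gt (by linarith)
  have h2 : b - s ≠ 0 := ne_of_gt (by linarith)
  have h3 : a - s ≠ 0 := ne_of_lt (by linarith)
  field_simp
  ring

lemma seg_param {k : ℕ} {s1 s2 : ℝ} {p : Plane} (hp : p ∈ segment ℝ (q k s1) (q k s2)) :
    ∃ r, s1 ⊓ s2 ≤ r ∧ r ≤ s1 ⊔ s2 ∧ p = q k r := by
  obtain ⟨a, b, ha, hb, hab, hp⟩ := hp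
  have ha' : a = 1 - b := by linarith
  subst ha'
  refine ⟨(1-b) * s1 + b * s2, ?_, ?_, ?_⟩
  · rcases le_total s1 s2 with h | h
    · rw [min_eq_left h]
      have h2 : (1-b) * s1 + b * s2 - s1 = b * (s2 - s1) := by ring
      linarith [mul_nonneg hb (sub_nonneg.2 h)]
    · rw [min_eq_right h]
      have h2 : (1-b) * s1 + b * s2 - s2 = (1-b) * (s1 - s2) := by ring
      linarith [mul_nonneg ha (sub_nonneg.2 h)]
  · rcases le_total s1 s2 with h | h
    · rw [max_eq_right h]
      have h2 : s2 - ((1-b) * s1 + b * s2) = (1-b) * (s2 - s1) := by ring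
      linarith [mul_nonneg ha (sub_nonneg.2 h)]
    · rw [max_eq_left h]
      have h2 : s1 - ((1-b) * s1 + b * s2) = b * (s1 - s2) := by ring
      linarith [mul_nonneg hb (sub_nonneg.2 h)]
  · have h0 := congrArg (fun p : Plane => p 0) hp
    have h1 := congrArg (fun p : Plane => p 1) hp
    apply plane_ext
    · rw [← h0]
      rfl
    · rw [← h1]
      show (1-b) * (2*(k:ℝ)*s1 - (k:ℝ)^2) + b * (2*(k:ℝ)*s2 - (k:ℝ)^2)
        = 2*(k:ℝ)*((1-b)*s1+b*s2) - (k:ℝ)^2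
      ring

lemma embeddedS {m : ℕ} {u v x y : Plane} (h1 : adjS m u v) (h2 : adjS m x y) :
    (u = x ∧ v = y) ∨ (u = y ∧ v = x) ∨
      ∀ p ∈ segment ℝ u v ∩ segment ℝ x y, (p = u ∨ p = v) ∧ (p = x ∨ p = y) := by
  obtain ⟨k, hk, s1, hs1, s2, hs2, hlt1, hcons1, hor1⟩ := h1
  obtain ⟨l, hl, r1, hr1, r2, hr2, hlt2, hcons2, hor2⟩ := h2
  have huv : segment ℝ u v = segment ℝ (q k s1) (q k s2) := by
    rcases hor1 with ⟨hu, hv⟩ | ⟨hu, hv⟩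
    · rw [hu, hv]
    · rw [hu, hv, segment_symm]
  have hxy : segment ℝ x y = segment ℝ (q l r1) (q l r2) := by
    rcases hor2 with ⟨hu, hv⟩ | ⟨hu, hv⟩
    · rw [hu, hv]
    · rw [hu, hv, segment_symm]
  have hmem1 : ∀ p : Plane, (p = q k s1 ∨ p = q k s2) → (p = u ∨ p = v) := by
    intro p h
    rcases hor1 with ⟨hu, hv⟩ | ⟨hu, hv⟩ <;> rcases h with h | h <;>
      simp [hu, hv, h]
  have hmem2 : ∀ p : Plane, (p = q l r1 ∨ p = q l r2) → (p = x ∨ p = y) := by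
    intro p h
    rcases hor2 with ⟨hu, hv⟩ | ⟨hu, hv⟩ <;> rcases h with h | h <;>
      simp [hu, hv, h]
  by_cases hkl : k = l
  · subst hkl
    by_cases hover : r1 < s2 ∧ s1 < r2
    · -- overlapping: same edge
      obtain ⟨ho1, ho2⟩ := hover
      have he1 : s1 = r1 := by
        rcases lt_trichotomy s1 r1 with h | h | h
        · exact absurd ⟨h, ho1⟩ (hcons1 r1 hr1)
        · exact h
        · exact absurd ⟨h, ho2⟩ (hcons2 s1 hs1)
      have he2 : s2 = r2 := by
        rcases lt_trichotomy s2 r2 with h | h | h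
        · refine absurd ⟨?_, h⟩ (hcons2 s2 hs2)
          rw [← he1]; exact hlt1
        · exact h
        · refine absurd ⟨?_, h⟩ (hcons1 r2 hr2)
          rw [he1]; exact hlt2
      subst he1; subst he2
      have hne : q k s1 ≠ q k s2 := fun h => (ne_of_lt hlt1) (q_inj h)
      rcases hor1 with ⟨hu, hv⟩ | ⟨hu, hv⟩ <;> rcases hor2 with ⟨hx, hy⟩ | ⟨hx, hy⟩
      · exact Or.inl ⟨hu.trans hx.symm, hv.trans hy.symm⟩
      · exact Or.inr (Or.inl ⟨hu.trans hy.symm, hv.trans hx.symm⟩)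
      · exact Or.inr (Or.inl ⟨hu.trans hy.symm, hv.trans hx.symm⟩)
      · exact Or.inl ⟨hu.trans hx.symm, hv.trans hy.symm⟩
    · -- disjoint interiors on the same line
      right; right
      intro p hp
      rw [Set.mem_inter_iff, huv, hxy] at hp
      obtain ⟨r, hra, hrb, hpr⟩ := seg_param hp.1
      obtain ⟨r', hra', hrb', hpr'⟩ := seg_param hp.2
      simp only [min_eq_left hlt1.le, max_eq_right hlt1.le] at hra hrb
      simp only [min_eq_left hlt2.le, max_eq_right hlt2.le] at hra' hrb'
      have hrr : r = r' := q_inj (hpr.symm.trans hpr')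
      rcases not_and_or.1 hover with h | h
      · push_neg at h
        have h1 : r = s2 := le_antisymm hrb (by rw [hrr]; linarith)
        have h2 : r' = r1 := le_antisymm (by rw [← hrr, h1]; exact h) hra'
        exact ⟨hmem1 p (Or.inr (by rw [hpr, h1])),
          hmem2 p (Or.inl (by rw [hpr', h2]))⟩
      · push_neg at h
        have h1 : r = s1 := le_antisymm (by rw [hrr]; linarith) hra
        have h2 : r' = r2 := le_antisymm hrb' (by rw [← hrr, h1]; exact h)
        exact ⟨hmem1 p (Or.inl (by rw [hpr, h1])),
          hmem2 p (Or.inr (by rw [hpr', h2]))⟩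
  · -- different lines
    right; right
    intro p hp
    rw [Set.mem_inter_iff, huv, hxy] at hp
    obtain ⟨r, hra, hrb, hpr⟩ := seg_param hp.1
    obtain ⟨r', hra', hrb', hpr'⟩ := seg_param hp.2
    simp only [min_eq_left hlt1.le, max_eq_right hlt1.le] at hra hrb
    simp only [min_eq_left hlt2.le, max_eq_right hlt2.le] at hra' hrb'
    obtain ⟨hrr, hrc⟩ := q_eq_q hkl (hpr.symm.trans hpr')
    have hs0k : ((k:ℝ)+l)/2 ∈ S m k := cross_mem_S hl (fun h => hkl h.symm)
    have hs0l : ((k:ℝ)+l)/2 ∈ S m l := cross_mem_S' hk hkl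
    have hc1 : r = s1 ∨ r = s2 := by
      by_contra hcon
      push_neg at hcon
      refine hcons1 (((k:ℝ)+l)/2) hs0k ⟨?_, ?_⟩
      · rw [← hrc]; exact lt_of_le_of_ne hra (fun h => hcon.1 h.symm)
      · rw [← hrc]; exact lt_of_le_of_ne hrb hcon.2
    have hc2 : r' = r1 ∨ r' = r2 := by
      by_contra hcon
      push_neg at hcon
      refine hcons2 (((k:ℝ)+l)/2) hs0l ⟨?_, ?_⟩
      · rw [← hrc, hrr]; exact lt_of_le_of_ne hra' (fun h => hcon.1 h.symm)
      · rw [← hrc, hrr]; exact lt_of_le_of_ne hrb' hcon.2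
    constructor
    · refine hmem1 p ?_
      rcases hc1 with h | h
      · exact Or.inl (by rw [hpr, h])
      · exact Or.inr (by rw [hpr, h])
    · refine hmem2 p ?_
      rcases hc2 with h | h
      · exact Or.inl (by rw [hpr', h])
      · exact Or.inr (by rw [hpr', h])

end Sharp

namespace Sharp

lemma pairs_card (m : ℕ) : (pairs m).card = m.choose 2 := by
  induction m with
  | zero => simp [pairs]
  | succ m ih =>
    have hsplit : pairs (m+1) = pairs m ∪ (Finset.range m).image (fun i => (i, m)) := by
      ext ⟨a, b⟩
      simp only [pairs, Finset.mem_filter, Finset.mem_product, Finset.mem_range,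
        Finset.mem_union, Finset.mem_image]
      constructor
      · rintro ⟨⟨ha, hb⟩, hab⟩
        rcases Nat.lt_succ_iff_lt_or_eq.1 hb with h | h
        · exact Or.inl ⟨⟨lt_trans hab h, h⟩, hab⟩
        · exact Or.inr ⟨a, by omega, by rw [h]⟩
      · rintro (⟨⟨ha, hb⟩, hab⟩ | ⟨i, hi, heq⟩)
        · exact ⟨⟨by omega, by omega⟩, hab⟩
        · obtain ⟨h1, h2⟩ := Prod.mk.injEq .. ▸ heq
          subst h1; subst h2
          exact ⟨⟨by omega, by omega⟩, hi⟩
    have hdisj : Disjoint (pairs m) ((Finset.range m).image (fun i => (i, m))) := by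
      rw [Finset.disjoint_left]
      rintro ⟨a, b⟩ hab hmem
      simp only [pairs, Finset.mem_filter, Finset.mem_product, Finset.mem_range] at hab
      simp only [Finset.mem_image, Finset.mem_range] at hmem
      obtain ⟨i, hi, heq⟩ := hmem
      obtain ⟨h1, h2⟩ := Prod.mk.injEq .. ▸ heq
      omega
    rw [hsplit, Finset.card_union_of_disjoint hdisj, ih,
      Finset.card_image_of_injective _ (fun a b h => (Prod.mk.injEq .. ▸ h).1),
      Finset.card_range]
    rw [Nat.choose_succ_succ, Nat.choose_one_right, Nat.add_comm]

lemma crossings_card (m : ℕ) : (crossings m).card = m.choose 2 := by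
  rw [crossings, Finset.card_image_of_injOn, pairs_card]
  rintro ⟨a, b⟩ hab ⟨a', b'⟩ hab' heq
  simp only [Finset.mem_coe, pairs, Finset.mem_filter, Finset.mem_product, Finset.mem_range] at hab hab'
  obtain ⟨⟨ha, hb⟩, h1⟩ := hab
  obtain ⟨⟨ha', hb'⟩, h2⟩ := hab'
  by_cases haa : a = a'
  · subst haa
    have := q_inj heq
    have : (b:ℝ) = b' := by linarith
    have : b = b' := by exact_mod_cast this
    subst this; rfl
  · exfalso
    obtain ⟨he1, he2⟩ := q_eq_q haa heq
    have hb2 : (b:ℝ) = a' := by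
      have := he2; linarith  -- (a+b)/2 = (a+a')/2
    have he1' : ((a:ℝ)+b)/2 = ((a':ℝ)+b')/2 := he1
    have hb2' : (b':ℝ) = a := by linarith
    have hba : b = a' := by exact_mod_cast hb2
    have hab2 : b' = a := by exact_mod_cast hb2'
    omega

lemma top_mem_attach {m i : ℕ} (hi : i < m) : q i (m:ℝ) ∈ attachS m :=
  Finset.mem_union_right _ (Finset.mem_image.2 ⟨i, Finset.mem_range.2 hi, rfl⟩)

lemma bot_mem_attach {m i : ℕ} (hi : i < m) : q i (-(m:ℝ)) ∈ attachS m :=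
  Finset.mem_union_left _ (Finset.mem_image.2 ⟨i, Finset.mem_range.2 hi, rfl⟩)

lemma mem_attach_iff {m : ℕ} {v : Plane} :
    v ∈ attachS m ↔ ∃ i, i < m ∧ (v = q i (-(m:ℝ)) ∨ v = q i (m:ℝ)) := by
  simp only [attachS, Finset.mem_union, Finset.mem_image, Finset.mem_range]
  constructor
  · rintro (⟨i, hi, rfl⟩ | ⟨i, hi, rfl⟩)
    · exact ⟨i, hi, Or.inl rfl⟩
    · exact ⟨i, hi, Or.inr rfl⟩
  · rintro ⟨i, hi, rfl | rfl⟩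
    · exact Or.inl ⟨i, hi, rfl⟩
    · exact Or.inr ⟨i, hi, rfl⟩

lemma attach_card {m : ℕ} (hm : 1 ≤ m) : (attachS m).card = 2 * m := by
  have hm' : (1:ℝ) ≤ m := by exact_mod_cast hm
  have hinj1 : Set.InjOn (fun i : ℕ => q i (-(m:ℝ))) (Finset.range m) := by
    rintro a ha b hb heq
    by_contra hne
    have h1 : (a:ℝ) + 1 ≤ m := by exact_mod_cast Finset.mem_range.1 ha
    have h2 : (b:ℝ) + 1 ≤ m := by exact_mod_cast Finset.mem_range.1 hb
    have := (q_eq_q hne heq).2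
    have h0 : (0:ℝ) ≤ (a:ℝ)+(b:ℝ) := by positivity
    linarith
  have hinj2 : Set.InjOn (fun i : ℕ => q i (m:ℝ)) (Finset.range m) := by
    rintro a ha b hb heq
    by_contra hne
    have h1 : (a:ℝ) + 1 ≤ m := by exact_mod_cast Finset.mem_range.1 ha
    have h2 : (b:ℝ) + 1 ≤ m := by exact_mod_cast Finset.mem_range.1 hb
    have := (q_eq_q hne heq).2
    linarith
  have hdisj : Disjoint ((Finset.range m).image (fun i : ℕ => q i (-(m:ℝ))))
      ((Finset.range m).image (fun i : ℕ => q i (m:ℝ))) := by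
    rw [Finset.disjoint_left]
    rintro v hv1 hv2
    obtain ⟨a, _, ha⟩ := Finset.mem_image.1 hv1
    obtain ⟨b, _, hb⟩ := Finset.mem_image.1 hv2
    have heq : q a (-(m:ℝ)) = q b (m:ℝ) := ha.trans hb.symm
    have h0 : -(m:ℝ) = (m:ℝ) := congrArg (fun p : Plane => p 0) heq
    linarith
  rw [attachS, Finset.card_union_of_disjoint hdisj,
    Finset.card_image_of_injOn hinj1, Finset.card_image_of_injOn hinj2, Finset.card_range]
  omega

lemma crossing_not_attach {m i j : ℕ} (hm : 1 ≤ m) (hi : i < m) (hj : j < m) (hij : i ≠ j) :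
    q i (((i:ℝ)+j)/2) ∉ attachS m := by
  intro h
  obtain ⟨hlo, hhi⟩ := cross_lt hi hj
  obtain ⟨k, hk, h | h⟩ := mem_attach_iff.1 h
  · have := (crossing_line hi hj hij hk h).2
    linarith [this.symm ▸ hlo]
  · have := (crossing_line hi hj hij hk h).2
    linarith [this.symm ▸ hhi]

lemma verts_card {m : ℕ} (hm : 1 ≤ m) : (vertsS m).card = m.choose 2 + 2 * m := by
  have hdisj : Disjoint (crossings m) (attachS m) := by
    rw [Finset.disjoint_left]
    intro v hv ha
    obtain ⟨⟨i, j⟩, hij, rfl⟩ := Finset.mem_image.1 hv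
    simp only [pairs, Finset.mem_filter, Finset.mem_product, Finset.mem_range] at hij
    exact crossing_not_attach hm hij.1.1 hij.1.2 (Nat.ne_of_lt hij.2) ha
  rw [vertsS, Finset.card_union_of_disjoint hdisj, crossings_card, attach_card hm]

lemma verts_not_attach {m : ℕ} {v : Plane} (hm : 1 ≤ m) (hv : v ∈ vertsS m)
    (hna : v ∉ attachS m) : ∃ i j, i < m ∧ j < m ∧ i ≠ j ∧ v = q i (((i:ℝ)+j)/2) := by
  obtain ⟨i, hi, s, hs, rfl⟩ := mem_vertsS.1 hv
  rcases mem_S.1 hs with h | h | ⟨j, hj1, hj2, h⟩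
  · exact absurd (h ▸ bot_mem_attach hi) hna
  · exact absurd (h ▸ top_mem_attach hi) hna
  · exact ⟨i, j, hi, hj1, fun h' => hj2 h'.symm, by rw [h]⟩

end Sharp

namespace Sharp

lemma four_pack {i j : ℕ} (hij : i ≠ j) {a b c d : ℝ}
    (ha : a < ((i:ℝ)+j)/2) (hb : ((i:ℝ)+j)/2 < b)
    (hc : c < ((i:ℝ)+j)/2) (hd : ((i:ℝ)+j)/2 < d) :
    ({q i a, q i b, q j c, q j d} : Finset Plane).card = 4 ∧
    ∑ u ∈ ({q i a, q i b, q j c, q j d} : Finset Plane),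
      (‖u - q i (((i:ℝ)+j)/2)‖⁻¹ • (u - q i (((i:ℝ)+j)/2))) = 0 := by
  have h1 : q i a ≠ q i b := fun h => by have := q_inj h; linarith
  have h2 : q i a ≠ q j c := fun h => by have := (q_eq_q hij h).2; linarith
  have h3 : q i a ≠ q j d := fun h => by have := (q_eq_q hij h).2; linarith
  have h4 : q i b ≠ q j c := fun h => by have := (q_eq_q hij h).2; linarith
  have h5 : q i b ≠ q j d := fun h => by have := (q_eq_q hij h).2; linarith
  have h6 : q j c ≠ q j d := fun h => by have := q_inj h; linarith
  have hn1 : q i a ∉ ({q i b, q j c, q j d} : Finset Plane) := by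
    simp [h1, h2, h3]
  have hn2 : q i b ∉ ({q j c, q j d} : Finset Plane) := by
    simp [h4, h5]
  have hn3 : q j c ∉ ({q j d} : Finset Plane) := by
    simp [h6]
  constructor
  · rw [Finset.card_insert_of_notMem hn1, Finset.card_insert_of_notMem hn2,
      Finset.card_insert_of_notMem hn3, Finset.card_singleton]
  · rw [Finset.sum_insert hn1, Finset.sum_insert hn2, Finset.sum_insert hn3,
      Finset.sum_singleton]
    have hA := unit_pair (i := i) ha hb
    have hB : ‖q j c - q i (((i:ℝ)+j)/2)‖⁻¹ • (q j c - q i (((i:ℝ)+j)/2)) +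
        ‖q j d - q i (((i:ℝ)+j)/2)‖⁻¹ • (q j d - q i (((i:ℝ)+j)/2)) = 0 := by
      rw [q_cross_comm i j]
      exact unit_pair hc hd
    rw [← add_assoc, hA, zero_add, hB]

end Sharp


/-- Theorem 1.2 (sharpness): for every even `n ≥ 2` there is a `4`-regular minimal graph
in the plane with `n` attaching points and exactly `C(n/2, 2) + n` vertices. -/
theorem four_regular_vertex_bound_sharp (n : ℕ) (h2 : 2 ≤ n) (heven : Even n) :
    ∃ G : PlaneMinGraph 4, G.attach.card = n ∧
      G.verts.card = Nat.choose (n / 2) 2 + n := by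
  classical
  obtain ⟨m, hm⟩ := heven
  subst hm
  have hm1 : 1 ≤ m := by omega
  have hn2 : (m + m) / 2 = m := by omega
  refine ⟨⟨Sharp.vertsS m, Sharp.adjS m, fun h => Sharp.adjS_symm h, Sharp.adjS_irrefl,
    fun h => Sharp.adjS_mem h, Sharp.attachS m, Finset.subset_union_right,
    fun h1 h2 => Sharp.embeddedS h1 h2, ?_, ?_, ?_⟩, ?_, ?_⟩
  · -- degree_attach
    intro a ha
    obtain ⟨i, hi, h | h⟩ := Sharp.mem_attach_iff.1 ha
    · subst h
      obtain ⟨w, hw⟩ := Sharp.filter_attach_bot hm1 hi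
      rw [hw, Finset.card_singleton]
    · subst h
      obtain ⟨w, hw⟩ := Sharp.filter_attach_top hm1 hi
      rw [hw, Finset.card_singleton]
  · -- degree_other
    intro v hv hna
    obtain ⟨i, j, hi, hj, hij, rfl⟩ := Sharp.verts_not_attach hm1 hv hna
    obtain ⟨a, b, c, d, _, _, _, _, ha, hb, hc, hd, hfil⟩ :=
      Sharp.filter_crossing hm1 hi hj hij
    rw [hfil]
    exact (Sharp.four_pack hij ha hb hc hd).1
  · -- balanced
    intro v hv hna
    obtain ⟨i, j, hi, hj, hij, rfl⟩ := Sharp.verts_not_attach hm1 hv hna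
    obtain ⟨a, b, c, d, _, _, _, _, ha, hb, hc, hd, hfil⟩ :=
      Sharp.filter_crossing hm1 hi hj hij
    rw [hfil]
    exact (Sharp.four_pack hij ha hb hc hd).2
  · -- attach card
    show (Sharp.attachS m).card = m + m
    rw [Sharp.attach_card hm1]
    omega
  · -- verts card
    show (Sharp.vertsS m).card = Nat.choose ((m + m) / 2) 2 + (m + m)
    rw [Sharp.verts_card hm1, hn2]
    omega


end
end
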